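/- arXiv:2503.03083 — 5 statements merged into one kernel-verified Lean document; each statement's English description precedes it below -/
import Mathlib

section
/- Let 0 < k < n be integers with n/2 ≤ k. Then the facets of the van der Waerden complex vdW(n,k) are exactly the intervals F_i = {i, i+1, ..., i+k} for 1 ≤ i ≤ n-k. -/
/-- `F` is a face of the van der Waerden complex `vdW(n,k)`: `F` is contained in a
full arithmetic progression `{a, a+j, ..., a+kj}` with `a ≥ 1`, `j ≥ 1`, `a + kj ≤ n`. -/
def vdwFace (n k : ℕ) (F : Finset ℕ) : Prop :=
  ∃ a j : ℕ, 1 ≤ a ∧ 1 ≤ j ∧ a + k * j ≤ n ∧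
    F ⊆ (Finset.range (k + 1)).image (fun i => a + i * j)

/-- A facet of `vdW(n,k)` is a face that is maximal under inclusion. -/
def vdwFacet (n k : ℕ) (F : Finset ℕ) : Prop :=
  vdwFace n k F ∧ ∀ G : Finset ℕ, vdwFace n k G → F ⊆ G → F = G

/-- `S` is a minimal non-face of `vdW(n,k)`: a subset of the vertex set `{1,...,n}`
that is not a face, but all of whose proper subsets are faces. -/
def vdwMinNonFace (n k : ℕ) (S : Finset ℕ) : Prop :=
  S ⊆ Finset.Icc 1 n ∧ ¬ vdwFace n k S ∧ ∀ T : Finset ℕ, T ⊂ S → vdwFace n k T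

lemma img_eq (a k : ℕ) :
    (Finset.range (k + 1)).image (fun i => a + i * 1) = Finset.Icc a (a + k) := by
  ext x
  simp only [Finset.mem_image, Finset.mem_range, Finset.mem_Icc, mul_one]
  constructor
  · rintro ⟨i, hi, rfl⟩; omega
  · rintro ⟨h1, h2⟩; exact ⟨x - a, by omega, by omega⟩

lemma j_eq_one {n k a j : ℕ} (hk : 0 < k) (h2 : n ≤ 2 * k) (ha : 1 ≤ a) (hj : 1 ≤ j)
    (h : a + k * j ≤ n) : j = 1 := by
  by_contra hne
  have hj2 : 2 ≤ j := by omega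
  have : 2 * k ≤ k * j := by nlinarith
  omega

lemma Icc_face {n k i : ℕ} (hi : 1 ≤ i) (hin : i + k ≤ n) :
    vdwFace n k (Finset.Icc i (i + k)) := by
  exact ⟨i, 1, hi, le_refl 1, by omega, by rw [img_eq]⟩

/-- If `n/2 ≤ k < n`, the facets of `vdW(n,k)` are exactly the intervals
`F_i = {i, i+1, ..., i+k}` for `1 ≤ i ≤ n-k`. -/
theorem vdW_facets_are_intervals (n k : ℕ) (hk : 0 < k) (hkn : k < n) (h2 : n ≤ 2 * k) :
    ∀ F : Finset ℕ, vdwFacet n k F ↔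
      ∃ i : ℕ, 1 ≤ i ∧ i + k ≤ n ∧ F = Finset.Icc i (i + k) := by
  intro F
  constructor
  · rintro ⟨⟨a, j, ha, hj, hle, hsub⟩, hmax⟩
    have hj1 : j = 1 := j_eq_one hk h2 ha hj hle
    subst hj1
    rw [img_eq] at hsub
    refine ⟨a, ha, by omega, ?_⟩
    exact hmax _ (Icc_face ha (by omega)) hsub
  · rintro ⟨i, hi, hin, rfl⟩
    refine ⟨Icc_face hi hin, ?_⟩
    rintro G ⟨a, j, ha, hj, hle, hsub⟩ hFG
    have hj1 : j = 1 := j_eq_one hk h2 ha hj hle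
    subst hj1
    rw [img_eq] at hsub
    have hia : i = a := by
      have h1 : i ∈ Finset.Icc a (a + k) := hsub (hFG (by simp))
      have h2' : i + k ∈ Finset.Icc a (a + k) := hsub (hFG (by simp))
      simp [Finset.mem_Icc] at h1 h2'
      omega
    subst hia
    exact Finset.Subset.antisymm hFG hsub
end

section
/- Let 0 < k < n be integers with n/2 ≤ k, and for 1 ≤ i ≤ n-k let F_i = {i, i+1, ..., i+k}. Then for every i with 1 < i ≤ n-k and every h with 1 ≤ h < i, one has F_h ∩ F_i ⊆ F_{i-1} ∩ F_i. Consequently the ordering F_1, ..., F_{n-k} of the facets of vdW(n,k) is a leaf order, i.e., vdW(n,k) is a quasi-forest. -/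
/-- If `n/2 ≤ k < n`, then for facets `F_i = Icc i (i+k)` of `vdW(n,k)`, for all
`1 < i ≤ n-k` and `1 ≤ h < i` we have `F_h ∩ F_i ⊆ F_{i-1} ∩ F_i`; consequently
`F_1, ..., F_{n-k}` is a leaf order, i.e. `vdW(n,k)` is a quasi-forest. -/
theorem vdW_leaf_order (n k : ℕ) (hk : 0 < k) (hkn : k < n) (h2 : n ≤ 2 * k) :
    (∀ i h : ℕ, 1 < i → i + k ≤ n → 1 ≤ h → h < i →
      Finset.Icc h (h + k) ∩ Finset.Icc i (i + k) ⊆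
        Finset.Icc (i - 1) ((i - 1) + k) ∩ Finset.Icc i (i + k)) ∧
    (∀ i : ℕ, 1 < i → i + k ≤ n → ∃ g : ℕ, 1 ≤ g ∧ g < i ∧
      ∀ h : ℕ, 1 ≤ h → h < i →
        Finset.Icc h (h + k) ∩ Finset.Icc i (i + k) ⊆
          Finset.Icc g (g + k) ∩ Finset.Icc i (i + k)) := by
  have key : ∀ i h : ℕ, 1 < i → i + k ≤ n → 1 ≤ h → h < i →
      Finset.Icc h (h + k) ∩ Finset.Icc i (i + k) ⊆
        Finset.Icc (i - 1) ((i - 1) + k) ∩ Finset.Icc i (i + k) := by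
    intro i h hi hik hh hhi x hx
    simp only [Finset.mem_inter, Finset.mem_Icc] at hx ⊢
    omega
  refine ⟨key, fun i hi hik => ⟨i - 1, by omega, by omega, fun h hh hhi => key i h hi hik hh hhi⟩⟩
end

section
/- Let n ≥ 7 and 1 < k < n/2 be integers, and let d be the largest integer such that 1 + kd ≤ n. Then the set {1, kd} is a minimal non-face of the van der Waerden complex vdW(n,k): it is not a face of vdW(n,k), but every proper subset of it is a face. -/
/-- For `n ≥ 7`, `1 < k < n/2`, and `d` the largest integer with `1 + kd ≤ n`,
the set `{1, kd}` is a minimal non-face of `vdW(n,k)`. -/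
theorem vdW_minimal_nonface_one_kd (n k d : ℕ) (hn : 7 ≤ n) (hk : 1 < k) (hkn : 2 * k < n)
    (hd : 1 + k * d ≤ n ∧ ∀ e : ℕ, 1 + k * e ≤ n → e ≤ d) :
    vdwMinNonFace n k {1, k * d} := by
  obtain ⟨hd1, hd2⟩ := hd
  have hd2' : 2 ≤ d := hd2 2 (by omega)
  have hkd : k * d ≤ n - 1 := by omega
  refine ⟨?_, ?_, ?_⟩
  · intro x hx
    simp only [Finset.mem_insert, Finset.mem_singleton] at hx
    rcases hx with rfl | rfl
    · simp [Finset.mem_Icc]; omega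
    · simp [Finset.mem_Icc]
      constructor
      · nlinarith
      · omega
  · rintro ⟨a, j, ha, hj, hajn, hsub⟩
    have h1 : (1 : ℕ) ∈ (Finset.range (k + 1)).image (fun i => a + i * j) :=
      hsub (by simp)
    have h2 : k * d ∈ (Finset.range (k + 1)).image (fun i => a + i * j) :=
      hsub (by simp)
    simp only [Finset.mem_image, Finset.mem_range] at h1 h2
    obtain ⟨i1, hi1, he1⟩ := h1
    obtain ⟨i2, hi2, he2⟩ := h2
    -- from he1 : a + i1 * j = 1 with a ≥ 1, j ≥ 1 we get a = 1, i1 = 0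
    have ha1 : a = 1 := by nlinarith
    have hi10 : i1 * j = 0 := by omega
    subst ha1
    -- j ≤ d from maximality
    have hjd : j ≤ d := hd2 j hajn
    -- i2 * j = k * d - 1
    have hij : i2 * j + 1 = k * d := by omega
    have hi2k : i2 ≤ k := by omega
    -- i2 * j ≤ k * d, and strict analysis
    rcases Nat.lt_or_ge i2 k with h | h
    · have h1 : i2 * j ≤ i2 * d := Nat.mul_le_mul_left i2 hjd
      have h2 : i2 * d + d = (i2 + 1) * d := by ring
      have h3 : (i2 + 1) * d ≤ k * d := Nat.mul_le_mul_right d (by omega)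
      omega
    · have hi2k' : i2 = k := by omega
      rw [hi2k'] at hij
      rcases Nat.lt_or_ge j d with h' | h'
      · have h1 : k * (j + 1) ≤ k * d := Nat.mul_le_mul_left k (by omega)
        have h2 : k * (j + 1) = k * j + k := by ring
        omega
      · have hjd' : j = d := by omega
        rw [hjd'] at hij
        omega
  · intro T hT
    have hTsub := hT.1
    have hne : ¬ ({1, k * d} : Finset ℕ) ⊆ T := hT.2
    have hkd1 : 1 < k * d := by nlinarith
    by_cases h1 : (1 : ℕ) ∈ T
    · -- then k*d ∉ T, so T ⊆ {1}
      have hkdT : k * d ∉ T := by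
        intro hkdT
        apply hne
        intro x hx
        simp only [Finset.mem_insert, Finset.mem_singleton] at hx
        rcases hx with rfl | rfl <;> assumption
      refine ⟨1, 1, le_refl _, le_refl _, by omega, ?_⟩
      intro x hx
      have hx' := hTsub hx
      simp only [Finset.mem_insert, Finset.mem_singleton] at hx'
      rcases hx' with rfl | rfl
      · simp only [Finset.mem_image, Finset.mem_range]
        exact ⟨0, by omega, by ring⟩
      · exact absurd hx hkdT
    · -- T ⊆ {k*d}; use a = k, j = d - 1
      have e2 : k * (d - 1) = k * d - k := by
        rw [mul_comm k (d - 1), Nat.sub_mul, one_mul, mul_comm]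
      have e3 : k ≤ k * d := Nat.le_mul_of_pos_right k (by omega)
      refine ⟨k, d - 1, by omega, by omega, by omega, ?_⟩
      intro x hx
      have hx' := hTsub hx
      simp only [Finset.mem_insert, Finset.mem_singleton] at hx'
      rcases hx' with rfl | rfl
      · exact absurd hx h1
      · simp only [Finset.mem_image, Finset.mem_range]
        exact ⟨k, by omega, by omega⟩
end

section
/- Let n ≥ 7 and 1 < k < n/2 be integers, let d be the largest integer such that 1 + kd ≤ n, and suppose d does not divide k. Then the set {1, 1+k(d-1), 1+kd} is a minimal non-face of the van der Waerden complex vdW(n,k): it is not a face of vdW(n,k), but every proper subset of it is a face. -/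
lemma vdwFace_subset {n k : ℕ} {F G : Finset ℕ} (h : F ⊆ G) (hG : vdwFace n k G) :
    vdwFace n k F := by
  obtain ⟨a, j, h1, h2, h3, h4⟩ := hG
  exact ⟨a, j, h1, h2, h3, h.trans h4⟩

/-- For `n ≥ 7`, `1 < k < n/2`, `d` the largest integer with `1 + kd ≤ n`, and `d ∤ k`,
the set `{1, 1+k(d-1), 1+kd}` is a minimal non-face of `vdW(n,k)`. -/
theorem vdW_minimal_nonface_ndvd (n k d : ℕ) (hn : 7 ≤ n) (hk : 1 < k) (hkn : 2 * k < n)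
    (hd : 1 + k * d ≤ n ∧ ∀ e : ℕ, 1 + k * e ≤ n → e ≤ d) (hndvd : ¬ d ∣ k) :
    vdwMinNonFace n k {1, 1 + k * (d - 1), 1 + k * d} := by
  obtain ⟨hd1, hdmax⟩ := hd
  have hd2 : 2 ≤ d := hdmax 2 (by omega)
  obtain ⟨d', rfl⟩ : ∃ d', d = d' + 1 := ⟨d - 1, by omega⟩
  have hd1' : 1 ≤ d' := by omega
  have hkpos : 0 < k := by omega
  simp only [Nat.add_sub_cancel]
  have hB : k * (d' + 1) = k * d' + k := by ring
  rw [hB] at hd1 ⊢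
  have hApos : 1 ≤ k * d' := Nat.one_le_iff_ne_zero.mpr (by positivity)
  -- face facts for the three pairs
  have hF2 : vdwFace n k {1, 1 + (k * d' + k)} := by
    refine ⟨1, d' + 1, le_refl 1, by omega, by rw [hB]; linarith, ?_⟩
    intro x hx
    simp only [Finset.mem_insert, Finset.mem_singleton] at hx
    rcases hx with rfl | rfl
    · exact Finset.mem_image.mpr ⟨0, by simp, by ring⟩
    · exact Finset.mem_image.mpr ⟨k, by simp, by ring⟩
  have hF1 : vdwFace n k {1, 1 + k * d'} := by
    refine ⟨1, d', le_refl 1, hd1', by linarith, ?_⟩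
    intro x hx
    simp only [Finset.mem_insert, Finset.mem_singleton] at hx
    rcases hx with rfl | rfl
    · exact Finset.mem_image.mpr ⟨0, by simp, by ring⟩
    · exact Finset.mem_image.mpr ⟨k, by simp, by ring⟩
  have hF3 : vdwFace n k {1 + k * d', 1 + (k * d' + k)} := by
    refine ⟨1 + k * d', 1, by omega, le_refl 1, by linarith [hd1], ?_⟩
    intro x hx
    simp only [Finset.mem_insert, Finset.mem_singleton] at hx
    rcases hx with rfl | rfl
    · exact Finset.mem_image.mpr ⟨0, by simp, by ring⟩
    · exact Finset.mem_image.mpr ⟨k, by simp, by ring⟩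
  refine ⟨?_, ?_, ?_⟩
  · -- subset of Icc 1 n
    intro x hx
    simp only [Finset.mem_insert, Finset.mem_singleton] at hx
    simp only [Finset.mem_Icc]
    rcases hx with rfl | rfl | rfl <;> omega
  · -- not a face
    rintro ⟨a, j, ha, hj, hle, hsub⟩
    have hm1 : (1 : ℕ) ∈ ({1, 1 + k * d', 1 + (k * d' + k)} : Finset ℕ) := by simp
    obtain ⟨i0, hi0, e0⟩ := Finset.mem_image.mp (hsub hm1)
    have ha1 : a = 1 := le_antisymm (e0 ▸ Nat.le_add_right a (i0 * j)) ha
    subst ha1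
    have hm2 : 1 + k * d' ∈ ({1, 1 + k * d', 1 + (k * d' + k)} : Finset ℕ) := by simp
    have hm3 : 1 + (k * d' + k) ∈ ({1, 1 + k * d', 1 + (k * d' + k)} : Finset ℕ) := by simp
    obtain ⟨i1, hi1, e1⟩ := Finset.mem_image.mp (hsub hm2)
    obtain ⟨i2, hi2, e2⟩ := Finset.mem_image.mp (hsub hm3)
    simp only [Finset.mem_range] at hi1 hi2
    have q1 : i1 * j = k * d' := Nat.add_left_cancel e1
    have q2 : i2 * j = k * d' + k := Nat.add_left_cancel e2
    have hjle : j ≤ d' + 1 := hdmax j hle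
    have h1 : k * (d' + 1) ≤ k * j := by
      have : i2 * j ≤ k * j := Nat.mul_le_mul_right j (by omega)
      calc k * (d' + 1) = i2 * j := by rw [q2]; ring
        _ ≤ k * j := this
    have hjge : d' + 1 ≤ j := Nat.le_of_mul_le_mul_left h1 hkpos
    have hjeq : j = d' + 1 := le_antisymm hjle hjge
    subst hjeq
    -- now derive (d'+1) ∣ k
    have hdvdZ : ((d' : ℤ) + 1) ∣ (k : ℤ) := by
      refine ⟨(k : ℤ) - (i1 : ℤ), ?_⟩
      have q1' : (i1 : ℤ) * ((d' : ℤ) + 1) = (k : ℤ) * (d' : ℤ) := by exact_mod_cast q1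
      linear_combination q1'
    apply hndvd
    have : ((d' + 1 : ℕ) : ℤ) ∣ ((k : ℕ) : ℤ) := by push_cast; exact hdvdZ
    exact_mod_cast this
  · -- all proper subsets are faces
    intro T hT
    obtain ⟨x, hxS, hxT⟩ := Finset.exists_of_ssubset hT
    have hTS : ∀ y ∈ T, y ∈ ({1, 1 + k * d', 1 + (k * d' + k)} : Finset ℕ) ∧ y ≠ x :=
      fun y hy => ⟨hT.subset hy, fun h => hxT (h ▸ hy)⟩
    simp only [Finset.mem_insert, Finset.mem_singleton] at hxS
    rcases hxS with rfl | rfl | rfl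
    · refine vdwFace_subset (G := {1 + k * d', 1 + (k * d' + k)}) ?_ hF3
      intro y hy
      obtain ⟨hyS, hyne⟩ := hTS y hy
      simp only [Finset.mem_insert, Finset.mem_singleton] at hyS ⊢
      rcases hyS with rfl | rfl | rfl
      · exact absurd rfl hyne
      · left; rfl
      · right; rfl
    · refine vdwFace_subset (G := {1, 1 + (k * d' + k)}) ?_ hF2
      intro y hy
      obtain ⟨hyS, hyne⟩ := hTS y hy
      simp only [Finset.mem_insert, Finset.mem_singleton] at hyS ⊢
      rcases hyS with rfl | rfl | rfl
      · left; rfl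
      · exact absurd rfl hyne
      · right; rfl
    · refine vdwFace_subset (G := {1, 1 + k * d'}) ?_ hF1
      intro y hy
      obtain ⟨hyS, hyne⟩ := hTS y hy
      simp only [Finset.mem_insert, Finset.mem_singleton] at hyS ⊢
      rcases hyS with rfl | rfl | rfl
      · left; rfl
      · right; rfl
      · exact absurd rfl hyne
end

section
/- Let 1 < k < n/2 be integers with n ≥ 7, let d be the largest integer such that 1 + kd ≤ n, and suppose d divides k and d < k. Then among the facets F_1, ..., F_d of vdW(n,k) containing the vertex 1 (where F_j = {1, 1+j, ..., 1+kj}), the vertex 1 + (k-1)d belongs to F_d and to no other F_j with 1 ≤ j ≤ d-1. -/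
/-- For `n ≥ 7`, `1 < k < n/2`, `d` the largest integer with `1 + kd ≤ n`, `d ∣ k`
and `d < k`: among the facets `F_j = {1, 1+j, ..., 1+kj}` (`1 ≤ j ≤ d`) of
`vdW(n,k)` containing `1`, the vertex `1 + (k-1)d` belongs to `F_d` and to no other
`F_j` with `1 ≤ j ≤ d-1`. -/
theorem vdW_vertex_only_in_Fd (n k d : ℕ) (hn : 7 ≤ n) (hk : 1 < k) (hkn : 2 * k < n)
    (hd : 1 + k * d ≤ n ∧ ∀ e : ℕ, 1 + k * e ≤ n → e ≤ d) (hdvd : d ∣ k) (hdk : d < k) :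
    1 + (k - 1) * d ∈ (Finset.range (k + 1)).image (fun i => 1 + i * d) ∧
    ∀ j : ℕ, 1 ≤ j → j ≤ d - 1 →
      1 + (k - 1) * d ∉ (Finset.range (k + 1)).image (fun i => 1 + i * j) := by
  constructor
  · exact Finset.mem_image.mpr ⟨k - 1, Finset.mem_range.mpr (by omega), rfl⟩
  · intro j hj1 hjd hmem
    obtain ⟨i, hi, hval⟩ := Finset.mem_image.mp hmem
    have hik : i ≤ k := by
      have := Finset.mem_range.mp hi; omega
    have heq : i * j = (k - 1) * d := by omega
    have hle : i * j ≤ k * (d - 1) :=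
      Nat.mul_le_mul hik (by omega)
    have hlt : k * (d - 1) < (k - 1) * d := by
      have hd2 : 2 ≤ d := by omega
      have h1 : k * d = k * (d - 1) + k * 1 := by
        rw [← Nat.mul_add]; congr 1; omega
      have h2 : k * d = (k - 1) * d + 1 * d := by
        rw [← Nat.add_mul]; congr 1; omega
      omega
    omega
end
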